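/- arXiv:1101.3057 — 2 statements merged into one kernel-verified Lean document; each statement's English description precedes it below -/
import Mathlib

section
/- Let α and β be idempotent partial transformations of {1,...,n} with the common domain A of cardinality m < n, equal kernels ker(α) = ker(β), and rank k. Fix a₀ ∈ A, and extend α, β to total transformations α', β' by setting cα' = a₀α and cβ' = a₀β for all c ∉ A. Then ker(α') = ker(β'), im(α') = im(α), im(β') = im(β), and the set {α, β, α', β'} is closed under composition with each product of two of these elements equal to the element in the row of the first factor and column of the second factor (i.e., it forms a 2×2 rectangular band: xy has the kernel of x and the image of y). -/
attribute [local instance] Classical.propDecidable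

/-- The monoid of partial transformations of `{1,…,n}`, written as partial maps
on `Fin n`, composed left-to-right: `x(αβ) = (xα)β`. -/
def PT (n : ℕ) : Type := Fin n → Option (Fin n)

instance (n : ℕ) : Mul (PT n) := ⟨fun α β x => (α x).bind β⟩
instance (n : ℕ) : One (PT n) := ⟨fun x => some x⟩

instance (n : ℕ) : Monoid (PT n) where
  mul_assoc a b c := funext fun x => by
    show ((a x).bind b).bind c = (a x).bind fun y => (b y).bind c
    cases a x <;> rfl
  one_mul a := funext fun _ => rfl
  mul_one a := funext fun x => by
    show (a x).bind some = a x
    cases a x <;> rfl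

namespace PT
variable {n : ℕ}

/-- The domain of a partial transformation. -/
def dom (α : PT n) : Set (Fin n) := {x | α x ≠ none}

/-- The image of a partial transformation. -/
def im (α : PT n) : Set (Fin n) := {y | ∃ x, α x = some y}

/-- The kernel: the partial equivalence `{(x,y) : x,y ∈ dom α, xα = yα}`. -/
def ker (α : PT n) : Fin n → Fin n → Prop :=
  fun x y => x ∈ α.dom ∧ y ∈ α.dom ∧ α x = α y

/-- The principal left ideal `PT_n · α` (the monoid contains `1`, so it contains `α`). -/
def leftIdeal (α : PT n) : Set (PT n) := Set.range fun γ => γ * α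

/-- The principal right ideal `α · PT_n`. -/
def rightIdeal (α : PT n) : Set (PT n) := Set.range fun γ => α * γ

end PT

/-!
Let `σ` be the total map that fixes `A` and sends every point outside `A` to `a₀`. Then
`α' = σα` and `β' = σβ`, while `ασ = α` and `βσ = β` because the images of the idempotents
lie in their common domain `A`. Equal kernels of idempotents give `αβ = β` and `βα = α`, and
every product in `{α, β, σα, σβ}` collapses to the rectangular band table by associativity.
-/

namespace PT

variable {n : ℕ}

theorem mul_apply_of_eq_none {α : PT n} {x : Fin n} (h : α x = none) (β : PT n) :
    (α * β) x = none := by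
  change (α x).bind β = none
  rw [h]; rfl

theorem mul_apply_of_eq_some {α : PT n} {x y : Fin n} (h : α x = some y) (β : PT n) :
    (α * β) x = β y := by
  change (α x).bind β = β y
  rw [h]; rfl

theorem mem_dom {α : PT n} {x : Fin n} : x ∈ α.dom ↔ α x ≠ none := Iff.rfl

theorem apply_eq_self_of_apply_eq_some {α : PT n} (hα : IsIdempotentElem α) {x y : Fin n}
    (h : α x = some y) : α y = some y := by
  rw [← mul_apply_of_eq_some h α, ← h, hα.eq]

theorem im_subset_dom {α : PT n} (hα : IsIdempotentElem α) : α.im ⊆ α.dom := by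
  rintro y ⟨x, hx⟩
  simp [mem_dom, apply_eq_self_of_apply_eq_some hα hx]

theorem dom_eq_of_ker_eq {α β : PT n} (h : α.ker = β.ker) : α.dom = β.dom := by
  ext x
  simpa [ker] using congrFun (congrFun h x) x

theorem mul_eq_right_of_ker_eq {α β : PT n} (hα : IsIdempotentElem α) (h : α.ker = β.ker) :
    α * β = β := by
  funext x
  rcases hx : α x with _ | y
  · have hβx : x ∉ β.dom := dom_eq_of_ker_eq h ▸ not_not.mpr hx
    rw [mem_dom, not_not] at hβx
    rw [mul_apply_of_eq_none hx, hβx]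
  · have hy := apply_eq_self_of_apply_eq_some hα hx
    have hxy : α.ker x y := ⟨by simp [mem_dom, hx], by simp [mem_dom, hy], hx.trans hy.symm⟩
    rw [h] at hxy
    rw [mul_apply_of_eq_some hx, hxy.2.2]

theorem ker_mul_iff {γ α : PT n} {x y : Fin n} :
    (γ * α).ker x y ↔ ∃ u v, γ x = some u ∧ γ y = some v ∧ α.ker u v := by
  rcases hx : γ x with _ | u <;> rcases hy : γ y with _ | v <;>
    simp [ker, mem_dom, mul_apply_of_eq_none, mul_apply_of_eq_some, hx, hy]

theorem ker_mul_left_congr (γ : PT n) {α β : PT n} (h : α.ker = β.ker) :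
    (γ * α).ker = (γ * β).ker := by
  funext x y
  simp only [ker_mul_iff, h]

theorem im_mul_of_dom_subset_im {γ α : PT n} (h : α.dom ⊆ γ.im) : (γ * α).im = α.im := by
  ext z
  constructor
  · rintro ⟨x, hx⟩
    rcases hγx : γ x with _ | u
    · simp [mul_apply_of_eq_none hγx] at hx
    · exact ⟨u, by rwa [mul_apply_of_eq_some hγx] at hx⟩
  · rintro ⟨u, hu⟩
    obtain ⟨x, hx⟩ := h (show u ∈ α.dom by simp [mem_dom, hu])
    exact ⟨x, by rw [mul_apply_of_eq_some hx, hu]⟩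

noncomputable def retract (A : Set (Fin n)) (a₀ : Fin n) : PT n :=
  fun x => some (if x ∈ A then x else a₀)

variable {A : Set (Fin n)} {a₀ : Fin n}

theorem subset_im_retract : A ⊆ (retract A a₀).im :=
  fun x hx => ⟨x, by simp [retract, hx]⟩

theorem mul_retract {α : PT n} (h : α.im ⊆ A) : α * retract A a₀ = α := by
  funext x
  rcases hx : α x with _ | y
  · exact mul_apply_of_eq_none hx _
  · simp [mul_apply_of_eq_some hx, retract, h ⟨x, hx⟩]

theorem eq_retract_mul {α α' : PT n} (hin : ∀ x ∈ A, α' x = α x)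
    (hout : ∀ x ∉ A, α' x = α a₀) : α' = retract A a₀ * α := by
  funext x
  have hσx : retract A a₀ x = some (if x ∈ A then x else a₀) := rfl
  by_cases hx : x ∈ A <;> simp [mul_apply_of_eq_some hσx, hx, hin, hout]

end PT

theorem stmt_5_general (n : ℕ) (α β α' β' : PT n) (A : Set (Fin n)) (a₀ : Fin n)
    (hα : α * α = α) (hβ : β * β = β)
    (hdα : α.dom = A) (hdβ : β.dom = A)
    (hker : α.ker = β.ker)
    (hα'in : ∀ x ∈ A, α' x = α x) (hα'out : ∀ x ∉ A, α' x = α a₀)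
    (hβ'in : ∀ x ∈ A, β' x = β x) (hβ'out : ∀ x ∉ A, β' x = β a₀) :
    α'.ker = β'.ker ∧ α'.im = α.im ∧ β'.im = β.im ∧
    -- the 2×2 rectangular band multiplication table on {α, β, α', β'}
    α * β = β ∧ β * α = α ∧ α * α' = α ∧ α' * α = α' ∧
    α * β' = β ∧ β' * α = α' ∧ β * α' = α ∧ α' * β = β' ∧
    β * β' = β ∧ β' * β = β' ∧ α' * β' = β' ∧ β' * α' = α' ∧
    α' * α' = α' ∧ β' * β' = β' := by
  obtain rfl := PT.eq_retract_mul hα'in hα'out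
  obtain rfl := PT.eq_retract_mul hβ'in hβ'out
  set σ := PT.retract A a₀
  have hασ (x : PT n) : α * (σ * x) = α * x := by
    rw [← mul_assoc, PT.mul_retract (hdα ▸ PT.im_subset_dom hα)]
  have hβσ (x : PT n) : β * (σ * x) = β * x := by
    rw [← mul_assoc, PT.mul_retract (hdβ ▸ PT.im_subset_dom hβ)]
  have hαβ : α * β = β := PT.mul_eq_right_of_ker_eq hα hker
  have hβα : β * α = α := PT.mul_eq_right_of_ker_eq hβ hker.symm
  refine ⟨PT.ker_mul_left_congr σ hker,
    PT.im_mul_of_dom_subset_im (hdα ▸ PT.subset_im_retract),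
    PT.im_mul_of_dom_subset_im (hdβ ▸ PT.subset_im_retract), ?_⟩
  simp only [mul_assoc, hασ, hβσ, hα, hβ, hαβ, hβα, and_self]

/-- Extending two `R`-equivalent idempotents `α, β` (common domain `A`, `|A| = m < n`,
equal kernels, rank `k`) to total maps `α', β'` by sending everything outside `A` to
`a₀α`, resp. `a₀β`, yields `ker α' = ker β'`, `im α' = im α`, `im β' = im β`, and
`{α, β, α', β'}` is a `2×2` rectangular band: each product has the kernel (row) of its
first factor and the image (column) of its second factor. -/
theorem stmt_5 (n m k : ℕ) (α β α' β' : PT n) (A : Set (Fin n)) (a₀ : Fin n)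
    (hα : α * α = α) (hβ : β * β = β)
    (hdα : α.dom = A) (hdβ : β.dom = A) (hA : A.ncard = m) (hmn : m < n)
    (hker : α.ker = β.ker) (hrkα : α.im.ncard = k) (hrkβ : β.im.ncard = k)
    (ha₀ : a₀ ∈ A)
    (hα'in : ∀ x ∈ A, α' x = α x) (hα'out : ∀ x ∉ A, α' x = α a₀)
    (hβ'in : ∀ x ∈ A, β' x = β x) (hβ'out : ∀ x ∉ A, β' x = β a₀) :
    α'.ker = β'.ker ∧ α'.im = α.im ∧ β'.im = β.im ∧
    -- the 2×2 rectangular band multiplication table on {α, β, α', β'}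
    α * β = β ∧ β * α = α ∧ α * α' = α ∧ α' * α = α' ∧
    α * β' = β ∧ β' * α = α' ∧ β * α' = α ∧ α' * β = β' ∧
    β * β' = β ∧ β' * β = β' ∧ α' * β' = β' ∧ β' * α' = α' ∧
    α' * α' = α' ∧ β' * β' = β' :=
  stmt_5_general n α β α' β' A a₀ hα hβ hdα hdβ hker hα'in hα'out hβ'in hβ'out
end

section
/- In the D-class D_{n-1} of PT_n consisting of partial transformations of rank n−1, there is no nontrivial 2×2 square of idempotents: there do not exist four distinct idempotents e, f, g, h of rank n−1 with e R f, g R h, e L g, f L h. -/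
attribute [local instance] Classical.propDecidable

/-!
A rank-`(n-1)` idempotent of `PT n` is the identity off a single point `w`, the one point
missing from its image, and sends `w` either nowhere or to some other point. The relation
`e L g` forces equal images, hence the same missing point. The relation `e R f` with `e ≠ f`
forces different missing points `w ≠ v`, and then `e` must send `w` to `v`. In a square
`e R f`, `g R h`, `e L g`, `f L h`, the idempotents `e` and `g` thus share their missing point
and both send it to the common missing point of `f` and `h`, so `e = g`.
-/

namespace PT

variable {n : ℕ}

theorem mul_apply_of_apply_eq_none {α : PT n} (β : PT n) {x : Fin n} (h : α x = none) :
    (α * β) x = none := by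
  change (α x).bind β = none
  rw [h]; rfl

theorem mul_apply_of_apply_eq_some {α : PT n} (β : PT n) {x y : Fin n} (h : α x = some y) :
    (α * β) x = β y := by
  change (α x).bind β = β y
  rw [h]; rfl

theorem mul_eq_of_rightIdeal_eq {e f : PT n} (he : e * e = e)
    (h : e.rightIdeal = f.rightIdeal) : e * f = f := by
  obtain ⟨γ, rfl⟩ : f ∈ e.rightIdeal := h ▸ ⟨1, mul_one f⟩
  rw [← mul_assoc, he]

theorem mul_eq_of_leftIdeal_eq {e g : PT n} (hg : g * g = g)
    (h : e.leftIdeal = g.leftIdeal) : e * g = e := by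
  obtain ⟨γ, rfl⟩ : e ∈ g.leftIdeal := h ▸ ⟨1, one_mul e⟩
  rw [mul_assoc, hg]

theorem im_mul_subset_right (α β : PT n) : (α * β).im ⊆ β.im := by
  rintro y ⟨x, hx⟩
  cases hαx : α x with
  | none => simp [mul_apply_of_apply_eq_none β hαx] at hx
  | some z => exact ⟨z, mul_apply_of_apply_eq_some β hαx ▸ hx⟩

theorem apply_eq_self_of_mem_im {e : PT n} (he : e * e = e) {y : Fin n} (hy : y ∈ e.im) :
    e y = some y := by
  obtain ⟨x, hx⟩ := hy
  simpa [mul_apply_of_apply_eq_some e hx, hx] using congrFun he x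

theorem exists_im_eq_compl_singleton {α : PT n} (hα : α.im.ncard = n - 1) (hn : 0 < n) :
    ∃ w, α.im = {w}ᶜ := by
  have hcard : ∀ w : Fin n, ({w}ᶜ : Set (Fin n)).ncard = n - 1 := fun w => by
    rw [Set.ncard_compl, Set.ncard_singleton, Nat.card_fin]
  obtain ⟨w, hw⟩ : ∃ w, w ∉ α.im := by
    by_contra! hall
    rw [Set.eq_univ_of_forall hall, Set.ncard_univ, Nat.card_fin] at hα
    omega
  have hsub : α.im ⊆ {w}ᶜ := fun y hy hyw => hw (hyw ▸ hy)
  exact ⟨w, Set.eq_of_subset_of_ncard_le hsub (by rw [hcard, hα]) (Set.toFinite _)⟩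

theorem im_eq_of_mul_eq {α β : PT n} (h : α * β = α) (hcard : β.im.ncard ≤ α.im.ncard) :
    α.im = β.im :=
  Set.eq_of_subset_of_ncard_le (h ▸ im_mul_subset_right α β) hcard (Set.toFinite _)

section MissingPoint

variable {e f : PT n} {w v : Fin n}

theorem apply_ne_self_of_im_eq (hw : e.im = {w}ᶜ) : e w ≠ some w := fun h =>
  (hw ▸ ⟨w, h⟩ : w ∈ ({w}ᶜ : Set (Fin n))) rfl

theorem apply_eq_self_of_im_eq (he : e * e = e) (hw : e.im = {w}ᶜ) {x : Fin n} (hx : x ≠ w) :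
    e x = some x :=
  apply_eq_self_of_mem_im he (hw ▸ hx)

theorem eq_of_mul_eq_of_im_eq (he : e * e = e) (hf : f * f = f) (hew : e.im = {w}ᶜ)
    (hfw : f.im = {w}ᶜ) (hef : e * f = f) : e = f := by
  funext x
  by_cases hx : x = w
  · subst hx
    have hfx := congrFun hef x
    cases hex : e x with
    | none => rw [← hfx, mul_apply_of_apply_eq_none f hex]
    | some y =>
      have hy : y ≠ x := fun hyx => apply_ne_self_of_im_eq hew (hyx ▸ hex)
      rw [← hfx, mul_apply_of_apply_eq_some f hex, apply_eq_self_of_im_eq hf hfw hy]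
  · rw [apply_eq_self_of_im_eq he hew hx, apply_eq_self_of_im_eq hf hfw hx]

theorem apply_eq_of_mul_eq_of_ne (he : e * e = e) (hf : f * f = f) (hew : e.im = {w}ᶜ)
    (hfv : f.im = {v}ᶜ) (hef : e * f = f) (hne : e ≠ f) : e w = some v := by
  have hwv : w ≠ v := by
    rintro rfl
    exact hne (eq_of_mul_eq_of_im_eq he hf hew hfv hef)
  have hfw := congrFun hef w
  rw [apply_eq_self_of_im_eq hf hfv hwv] at hfw
  cases hew' : e w with
  | none => simp [mul_apply_of_apply_eq_none f hew'] at hfw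
  | some z =>
    rw [mul_apply_of_apply_eq_some f hew'] at hfw
    rcases eq_or_ne z v with rfl | hzv
    · rfl
    rw [apply_eq_self_of_im_eq hf hfv hzv, Option.some_inj] at hfw
    exact absurd (hfw ▸ hew') (apply_ne_self_of_im_eq hew)

end MissingPoint

end PT

open PT in
/-- In the `D`-class of rank-`(n-1)` elements of `PT_n` there is no nontrivial
`2×2` square of idempotents: no four distinct idempotents `e, f, g, h` of rank `n-1`
with `e R f`, `g R h`, `e L g`, `f L h`. -/
theorem stmt_16 (n : ℕ) :
    ¬ ∃ e f g h : PT n,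
        e * e = e ∧ f * f = f ∧ g * g = g ∧ h * h = h ∧
        e.im.ncard = n - 1 ∧ f.im.ncard = n - 1 ∧
        g.im.ncard = n - 1 ∧ h.im.ncard = n - 1 ∧
        e ≠ f ∧ e ≠ g ∧ e ≠ h ∧ f ≠ g ∧ f ≠ h ∧ g ≠ h ∧
        e.rightIdeal = f.rightIdeal ∧ g.rightIdeal = h.rightIdeal ∧
        e.leftIdeal = g.leftIdeal ∧ f.leftIdeal = h.leftIdeal := by
  rintro ⟨e, f, g, h, he, hf, hg, hh, hime, himf, himg, himh,
    hef, heg, -, -, -, hgh, hR₁, hR₂, hL₁, hL₂⟩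
  rcases Nat.eq_zero_or_pos n with rfl | hn
  · exact hef (funext fun x => x.elim0)
  obtain ⟨we, hwe⟩ := exists_im_eq_compl_singleton hime hn
  obtain ⟨wf, hwf⟩ := exists_im_eq_compl_singleton himf hn
  obtain ⟨wg, hwg⟩ := exists_im_eq_compl_singleton himg hn
  obtain ⟨wh, hwh⟩ := exists_im_eq_compl_singleton himh hn
  have heg_im : e.im = g.im :=
    im_eq_of_mul_eq (mul_eq_of_leftIdeal_eq hg hL₁) (by rw [himg, hime])
  have hfh_im : f.im = h.im :=
    im_eq_of_mul_eq (mul_eq_of_leftIdeal_eq hh hL₂) (by rw [himh, himf])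
  have hge : wg = we := by simpa [hwe, hwg] using heg_im.symm
  have hhf : wh = wf := by simpa [hwf, hwh] using hfh_im.symm
  have hew : e we = some wf :=
    apply_eq_of_mul_eq_of_ne he hf hwe hwf (mul_eq_of_rightIdeal_eq he hR₁) hef
  have hgw : g wg = some wh :=
    apply_eq_of_mul_eq_of_ne hg hh hwg hwh (mul_eq_of_rightIdeal_eq hg hR₂) hgh
  subst hge hhf
  apply heg
  funext x
  by_cases hx : x = wg
  · rw [hx, hew, hgw]
  · rw [apply_eq_self_of_im_eq he hwe hx, apply_eq_self_of_im_eq hg hwg hx]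
end
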